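/- Let T₀, T₁ : ℝ → ℝ be given by T₀(x) = x/2 and T₁(x) = (3x+1)/2. The semigroup of maps generated by T₀ and T₁ under composition is free on these two generators: if (i₁,…,iₘ) and (j₁,…,jₙ) are nonempty finite sequences with entries in {0,1} such that the compositions T_{i₁} ∘ ⋯ ∘ T_{iₘ} and T_{j₁} ∘ ⋯ ∘ T_{jₙ} are equal as functions on ℝ, then m = n and i_k = j_k for all k. -/

import Mathlib

/-! A word `w` of length `n` with `k` letters `T₁` is the affine map `x ↦ 3ᵏ/2ⁿ · x + w(0)`, so
`w` determines `n`. Moreover `2ⁿ · w(0)` is an integer, odd exactly when the innermost letter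
is `T₁`, so `w` also determines its last letter; as both `Tᵢ` are surjective, that letter can be
cancelled on the right, and induction on the length finishes. -/

/-- Apply the composition T_{i₁} ∘ ⋯ ∘ T_{iₘ} to x, where `false` stands for
T₀(x) = x/2 and `true` stands for T₁(x) = (3x+1)/2, and the list is
[i₁, …, iₘ]. -/
noncomputable def applyWord (l : List Bool) (x : ℝ) : ℝ :=
  l.foldr (fun b y => if b then (3 * y + 1) / 2 else y / 2) x

noncomputable def collatzMap (b : Bool) (x : ℝ) : ℝ :=
  if b then (3 * x + 1) / 2 else x / 2

lemma collatzMap_surjective (b : Bool) : Function.Surjective (collatzMap b) := by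
  intro y
  cases b
  · exact ⟨2 * y, by simp [collatzMap]⟩
  · exact ⟨(2 * y - 1) / 3, by simp only [collatzMap, if_true]; ring⟩

lemma applyWord_cons (b : Bool) (l : List Bool) (x : ℝ) :
    applyWord (b :: l) x = collatzMap b (applyWord l x) := rfl

lemma applyWord_concat (l : List Bool) (b : Bool) (x : ℝ) :
    applyWord (l ++ [b]) x = applyWord l (collatzMap b x) := by
  simp [applyWord, collatzMap]

lemma applyWord_eq_mul_add_applyWord_zero (l : List Bool) (x : ℝ) :
    applyWord l x = 3 ^ l.count true / 2 ^ l.length * x + applyWord l 0 := by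
  induction l with
  | nil => simp [applyWord]
  | cons b l ih =>
    rw [applyWord_cons, applyWord_cons, ih]
    cases b <;> simp [collatzMap, pow_succ] <;> ring

lemma exists_int_eq_two_pow_length_mul_applyWord_zero (l : List Bool) :
    ∃ z : ℤ, 2 ^ l.length * applyWord l 0 = z := by
  induction l with
  | nil => exact ⟨0, by simp [applyWord]⟩
  | cons b l ih =>
    obtain ⟨z, hz⟩ := ih
    cases b
    · refine ⟨z, ?_⟩
      rw [applyWord_cons, collatzMap, List.length_cons, ← hz, if_neg Bool.false_ne_true]
      ring
    · refine ⟨3 * z + 2 ^ l.length, ?_⟩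
      rw [applyWord_cons, collatzMap, List.length_cons, if_pos rfl]
      push_cast [← hz]
      ring

lemma exists_int_two_pow_length_mul_applyWord_concat_zero (l : List Bool) (b : Bool) :
    ∃ z : ℤ, 2 ^ (l ++ [b]).length * applyWord (l ++ [b]) 0 =
      2 * z + if b then 3 ^ l.count true else 0 := by
  obtain ⟨z, hz⟩ := exists_int_eq_two_pow_length_mul_applyWord_zero l
  refine ⟨z, ?_⟩
  rw [applyWord_concat, applyWord_eq_mul_add_applyWord_zero, List.length_append,
    List.length_singleton, pow_succ]
  cases b
  · simp only [collatzMap, Bool.false_eq_true, ↓reduceIte, zero_div, mul_zero, add_zero, ← hz]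
    ring
  · simp [collatzMap, ← hz]
    field_simp
    ring

lemma eq_of_three_pow_div_two_pow_eq {a b m n : ℕ} (h : (3 : ℝ) ^ a / 2 ^ m = 3 ^ b / 2 ^ n) :
    m = n := by
  have h' : 3 ^ a * 2 ^ n = 3 ^ b * 2 ^ m := by
    rw [div_eq_div_iff (by positivity) (by positivity)] at h
    exact_mod_cast h
  simpa [Nat.factorization_mul, Nat.Prime.factorization_pow, Nat.prime_two.factorization,
    Nat.prime_three.factorization] using congrArg (fun k => k.factorization 2) h'.symm

lemma length_eq_of_applyWord_eq {l₁ l₂ : List Bool} (h : applyWord l₁ = applyWord l₂) :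
    l₁.length = l₂.length := by
  apply eq_of_three_pow_div_two_pow_eq (a := l₁.count true) (b := l₂.count true)
  have h₁ := congrFun h 1
  rw [applyWord_eq_mul_add_applyWord_zero, applyWord_eq_mul_add_applyWord_zero l₂,
    congrFun h 0] at h₁
  simpa using h₁

lemma eq_of_applyWord_concat_eq {l₁ l₂ : List Bool} {a b : Bool}
    (h : applyWord (l₁ ++ [a]) = applyWord (l₂ ++ [b])) : a = b := by
  obtain ⟨z₁, hz₁⟩ := exists_int_two_pow_length_mul_applyWord_concat_zero l₁ a
  obtain ⟨z₂, hz₂⟩ := exists_int_two_pow_length_mul_applyWord_concat_zero l₂ b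
  rw [length_eq_of_applyWord_eq h, congrFun h 0, hz₂] at hz₁
  have hodd (k : ℕ) : Odd ((3 : ℤ) ^ k) := Odd.pow (by decide)
  have hz : 2 * z₂ + (if b then 3 ^ l₂.count true else 0 : ℤ) =
      2 * z₁ + if a then 3 ^ l₁.count true else 0 := by exact_mod_cast hz₁
  obtain ⟨k₁, hk₁⟩ := hodd (l₁.count true)
  obtain ⟨k₂, hk₂⟩ := hodd (l₂.count true)
  cases a <;> cases b <;>
    first | rfl | (simp only [if_true, if_false, Bool.false_eq_true] at hz; omega)

theorem applyWord_injective : Function.Injective applyWord := by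
  intro l₁
  induction l₁ using List.reverseRecOn with
  | nil =>
    intro l₂ h
    exact (List.length_eq_zero_iff.mp (length_eq_of_applyWord_eq h).symm).symm
  | append_singleton l₁ a ih =>
    intro l₂ h
    obtain rfl | ⟨l₂, b, rfl⟩ := List.eq_nil_or_concat' l₂
    · simpa using length_eq_of_applyWord_eq h
    obtain rfl := eq_of_applyWord_concat_eq h
    rw [ih (funext fun y => ?_)]
    obtain ⟨x, rfl⟩ := collatzMap_surjective a y
    rw [← applyWord_concat, ← applyWord_concat, h]

theorem semigroup_free_on_T0_T1_general (l₁ l₂ : List Bool)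
    (h : ∀ x : ℝ, applyWord l₁ x = applyWord l₂ x) : l₁ = l₂ :=
  applyWord_injective (funext h)

/-- (Misiurewicz–Rodrigues, 2005) The semigroup generated by T₀(x) = x/2 and
T₁(x) = (3x+1)/2 under composition is free on these two generators: if two
nonempty words define the same function on ℝ, the words coincide. -/
theorem semigroup_free_on_T0_T1 (l₁ l₂ : List Bool) (h₁ : l₁ ≠ []) (h₂ : l₂ ≠ [])
    (h : ∀ x : ℝ, applyWord l₁ x = applyWord l₂ x) : l₁ = l₂ :=
  semigroup_free_on_T0_T1_general l₁ l₂ h
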